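/- arXiv:1905.13272 — 4 statements merged into one kernel-verified Lean document; each statement's English description precedes it below -/
import Mathlib

section
/- Let f : [0,1]^n → ℝ≥0 be a differentiable DR-submodular function (i.e., ∇f(x) ≥ ∇f(y) coordinate-wise whenever x ≤ y coordinate-wise). Then for all x*, x ∈ [0,1]^n, f(x* ∨ x) ≥ (1 - ‖x‖_∞) f(x*), where ∨ denotes the coordinate-wise maximum. -/
theorem vecDR {n : ℕ} {f : (Fin n → ℝ) → ℝ}
    (hDR : ∀ x y : Fin n → ℝ, (∀ i, 0 ≤ x i) → x ≤ y → (∀ i, y i ≤ 1) →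
      ∀ (i : Fin n) (δ : ℝ), 0 ≤ δ → δ ≤ 1 → x i + δ ≤ 1 → y i + δ ≤ 1 →
        f (x + δ • (Pi.single i 1 : Fin n → ℝ)) - f x ≥ f (y + δ • (Pi.single i 1 : Fin n → ℝ)) - f y)
    (u v w : Fin n → ℝ) (hu0 : ∀ i, 0 ≤ u i) (huv : u ≤ v)
    (hw0 : ∀ i, 0 ≤ w i) (hv1 : ∀ i, v i + w i ≤ 1) :
    f (u + w) - f u ≥ f (v + w) - f v := by
  have key : ∀ s : Finset (Fin n),
      f (u + fun j => if j ∈ s then w j else 0) - f u ≥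
      f (v + fun j => if j ∈ s then w j else 0) - f v := by
    intro s
    induction s using Finset.induction with
    | empty =>
      have h0 : (fun j : Fin n => if j ∈ (∅ : Finset (Fin n)) then w j else 0) = 0 := by
        funext j; simp
      rw [h0, add_zero, add_zero]; simp
    | @insert i s hi ih =>
      set ws : Fin n → ℝ := fun j => if j ∈ s then w j else 0 with hws
      have hws0 : ∀ j, 0 ≤ ws j := by
        intro j; simp only [hws]; split
        · exact hw0 j
        · exact le_rfl
      have hwsle : ∀ j, ws j ≤ w j := by
        intro j; simp only [hws]; split
        · exact le_rfl
        · exact hw0 j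
      have hwsi : ws i = 0 := by simp [hws, hi]
      have heq : (fun j => if j ∈ insert i s then w j else 0)
          = ws + (w i) • (Pi.single i 1 : Fin n → ℝ) := by
        funext j
        by_cases hji : j = i
        · subst hji
          simp [hws, hi, Pi.single_eq_same]
        · simp [hws, Pi.single_eq_of_ne hji, Finset.mem_insert, hji]
      have huvj : ∀ j, u j ≤ v j := fun j => Pi.le_def.mp huv j
      have hwile : w i ≤ 1 := by
        have h1 := hv1 i; have h2 := hu0 i; have h3 := huvj i; linarith
      have hstep := hDR (u + ws) (v + ws)
        (fun j => add_nonneg (hu0 j) (hws0 j))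
        (Pi.le_def.mpr fun j => add_le_add (huvj j) le_rfl)
        (fun j => by have := hwsle j; have := hv1 j; simp only [Pi.add_apply]; linarith)
        i (w i) (hw0 i) hwile
        (by simp only [Pi.add_apply, hwsi, add_zero]; have := hv1 i; have := huvj i; linarith)
        (by simp only [Pi.add_apply, hwsi, add_zero]; exact hv1 i)
      rw [heq, ← add_assoc, ← add_assoc]
      have e1 : f (u + ws + w i • (Pi.single i 1 : Fin n → ℝ)) - (f (u + ws)) ≥
          f (v + ws + w i • (Pi.single i 1 : Fin n → ℝ)) - f (v + ws) := hstep
      linarith [ih]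
  have h := key Finset.univ
  have hu : (fun j : Fin n => if j ∈ (Finset.univ : Finset (Fin n)) then w j else 0) = w := by
    funext j; simp
  rwa [hu] at h

set_option maxHeartbeats 2000000 in
theorem stmt_1 (n : ℕ) (f : (Fin n → ℝ) → ℝ)
    (hf_nonneg : ∀ x : Fin n → ℝ, (∀ i, 0 ≤ x i ∧ x i ≤ 1) → 0 ≤ f x)
    (hDR : ∀ x y : Fin n → ℝ, (∀ i, 0 ≤ x i) → x ≤ y → (∀ i, y i ≤ 1) →
      ∀ (i : Fin n) (δ : ℝ), 0 ≤ δ → δ ≤ 1 → x i + δ ≤ 1 → y i + δ ≤ 1 →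
        f (x + δ • (Pi.single i 1 : Fin n → ℝ)) - f x ≥ f (y + δ • (Pi.single i 1 : Fin n → ℝ)) - f y)
    (xs x : Fin n → ℝ)
    (hxs : ∀ i, 0 ≤ xs i ∧ xs i ≤ 1) (hx : ∀ i, 0 ≤ x i ∧ x i ≤ 1) :
    f (xs ⊔ x) ≥ (1 - ‖x‖) * f xs := by
  set a : ℝ := ‖x‖ with haa
  have ha0 : 0 ≤ a := norm_nonneg x
  have hxa : ∀ i, x i ≤ a := by
    intro i
    calc x i ≤ |x i| := le_abs_self _
    _ = ‖x i‖ := (Real.norm_eq_abs _).symm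
    _ ≤ ‖x‖ := norm_le_pi_norm x i
  have ha1 : a ≤ 1 := by
    apply pi_norm_le_iff_of_nonneg (by norm_num : (0:ℝ) ≤ 1) |>.mpr
    intro i
    rw [Real.norm_eq_abs, abs_le]
    exact ⟨by linarith [(hx i).1], (hx i).2⟩
  set d : Fin n → ℝ := fun i => max (xs i) (x i) - xs i with hdd
  have hd0 : ∀ i, 0 ≤ d i := fun i => sub_nonneg.mpr (le_max_left _ _)
  have hda : ∀ i, d i ≤ a * (1 - xs i) := by
    intro i
    have h1 := (hxs i).1; have h2 := (hxs i).2
    have h3 := (hx i).1; have h4 := (hx i).2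
    have h5 := hxa i
    rcases le_total (x i) (xs i) with h | h
    · simp only [hdd]
      rw [max_eq_left h]
      have : (0:ℝ) ≤ a * (1 - xs i) := mul_nonneg ha0 (by linarith)
      linarith
    · simp only [hdd]
      rw [max_eq_right h]
      nlinarith
  rcases eq_or_lt_of_le ha0 with ha | ha
  · -- a = 0 case
    have hx0 : xs ⊔ x = xs := by
      funext i
      have h5 := hxa i
      have h3 := (hx i).1
      have : x i = 0 := le_antisymm (by linarith) h3
      show max (xs i) (x i) = xs i
      rw [this]; exact max_eq_left (hxs i).1
    rw [hx0, ← ha]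
    simp only [sub_zero, one_mul]
    exact le_refl _
  -- main case 0 < a
  have main : ∀ m : ℕ, 2 ≤ m → (1 - ((m:ℝ)*a)/((m:ℝ)-a)) * f xs ≤ f (xs ⊔ x) := by
    intro m hm
    have hm0 : (0:ℝ) < m := by
      have : (2:ℝ) ≤ m := by exact_mod_cast hm
      linarith
    have hma : (0:ℝ) < (m:ℝ) - a := by
      have : (2:ℝ) ≤ m := by exact_mod_cast hm
      linarith
    set K : ℕ := Nat.floor ((m:ℝ)/a) with hKK
    have hmK : m ≤ K := Nat.le_floor (by
      rw [le_div_iff₀ ha]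
      nlinarith [mul_le_mul_of_nonneg_left ha1 hm0.le])
    have hKle : (K:ℝ) ≤ (m:ℝ)/a := Nat.floor_le (by positivity)
    have hKge : ((m:ℝ) - a)/a ≤ K := by
      have h1 : (m:ℝ)/a < K + 1 := Nat.lt_floor_add_one _
      rw [div_le_iff₀ ha]
      rw [div_lt_iff₀ ha] at h1
      nlinarith
    have hKpos : (0:ℝ) < K := by
      have : (m:ℝ) ≤ K := by exact_mod_cast hmK
      linarith
    set p : ℕ → (Fin n → ℝ) := fun k => xs + ((k:ℝ)/m) • d with hpp
    have hpki : ∀ k i, p k i = xs i + ((k:ℝ)/m) * d i := by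
      intro k i; simp [hpp]
    have hp0 : ∀ k i, 0 ≤ p k i := by
      intro k i
      rw [hpki]
      have : (0:ℝ) ≤ ((k:ℝ)/m) * d i := mul_nonneg (by positivity) (hd0 i)
      linarith [(hxs i).1]
    have hp1 : ∀ k, k ≤ K → ∀ i, p k i ≤ 1 := by
      intro k hk i
      rw [hpki]
      have h1 : (k:ℝ)/m ≤ 1/a := by
        have hk1 : (k:ℝ) ≤ K := by exact_mod_cast hk
        have hk2 : (k:ℝ)*a ≤ m := by
          have h9 := hk1.trans hKle
          rwa [le_div_iff₀ ha] at h9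
        rw [div_le_div_iff₀ hm0 ha]
        linarith
      have h2 : ((k:ℝ)/m) * d i ≤ (1/a) * (a * (1 - xs i)) :=
        mul_le_mul h1 (hda i) (hd0 i) (by positivity)
      have h3 : (1/a) * (a * (1 - xs i)) = 1 - xs i := by
        field_simp
      rw [h3] at h2
      linarith
    have hpmono : ∀ k, p k ≤ p (k+1) := by
      intro k
      apply Pi.le_def.mpr
      intro i
      rw [hpki, hpki]
      have hc : (((k+1:ℕ)):ℝ) = (k:ℝ)+1 := by push_cast; ring
      rw [hc]
      have h1 : (k:ℝ)/m ≤ ((k:ℝ)+1)/m := (div_le_div_iff_of_pos_right hm0).mpr (by linarith)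
      have h2 : ((k:ℝ)/m) * d i ≤ (((k:ℝ)+1)/m) * d i :=
        mul_le_mul_of_nonneg_right h1 (hd0 i)
      linarith
    set η : ℕ → ℝ := fun k => f (p (k+1)) - f (p k) with hee
    have hstepv : ∀ k, p k + (1/(m:ℝ)) • d = p (k+1) := by
      intro k
      funext i
      show p k i + (1/(m:ℝ)) * d i = p (k+1) i
      rw [hpki, hpki]
      have hc : (((k+1:ℕ)):ℝ) = (k:ℝ)+1 := by push_cast; ring
      rw [hc]
      field_simp
      ring
    have hw0' : ∀ i, 0 ≤ ((1/(m:ℝ)) • d) i := by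
      intro i
      show (0:ℝ) ≤ (1/(m:ℝ)) * d i
      exact mul_nonneg (by positivity) (hd0 i)
    have hη : ∀ k, k + 2 ≤ K → η (k+1) ≤ η k := by
      intro k hk
      have hv1' : ∀ i, p (k+1) i + ((1/(m:ℝ)) • d) i ≤ 1 := by
        intro i
        have := hstepv (k+1)
        have h2 : p (k+1) i + ((1/(m:ℝ)) • d) i = p (k+2) i := by
          rw [← this]; rfl
        rw [h2]
        exact hp1 (k+2) hk i
      have := vecDR hDR (p k) (p (k+1)) ((1/(m:ℝ)) • d)
        (hp0 k) (hpmono k) hw0' hv1'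
      rw [hstepv k, hstepv (k+1)] at this
      show f (p (k+2)) - f (p (k+1)) ≤ f (p (k+1)) - f (p k)
      exact this
    have hmono : ∀ k, k + 1 ≤ K → ∀ j, j ≤ k → η k ≤ η j := by
      intro k
      induction k with
      | zero =>
        intro _ j hj
        have : j = 0 := Nat.le_zero.mp hj
        rw [this]
      | succ k ih =>
        intro hk j hj
        rcases Nat.lt_succ_iff_lt_or_eq.mp (Nat.lt_succ_of_le hj) with h | h
        · have h1 : η (k+1) ≤ η k := hη k (by omega)
          have h2 : η k ≤ η j := ih (by omega) j (by omega)
          linarith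
        · rw [h]
    have hsum : ∀ N : ℕ, ∑ k ∈ Finset.range N, η k = f (p N) - f (p 0) := by
      intro N
      simp only [hee]
      exact Finset.sum_range_sub (fun k => f (p k)) N
    have hp0eq : p 0 = xs := by
      funext i
      rw [hpki]
      simp
    have hpmeq : p m = xs ⊔ x := by
      funext i
      rw [hpki]
      have hmne : (m:ℝ) ≠ 0 := ne_of_gt hm0
      rw [div_self hmne]
      show xs i + 1 * d i = max (xs i) (x i)
      simp only [hdd]
      ring
    have hfK : 0 ≤ f (p K) := hf_nonneg (p K) (fun i => ⟨hp0 K i, hp1 K le_rfl i⟩)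
    set Sm : ℝ := ∑ k ∈ Finset.range m, η k with hSm
    set SK : ℝ := ∑ k ∈ Finset.range K, η k with hSK
    set T : ℝ := ∑ k ∈ Finset.Ico m K, η k with hT
    have hsplit : Sm + T = SK := by
      rw [hSm, hT, hSK]
      exact Finset.sum_range_add_sum_Ico η hmK
    have hSmval : Sm = f (xs ⊔ x) - f xs := by
      rw [hSm, hsum m, hp0eq, hpmeq]
    have hSKval : SK = f (p K) - f xs := by
      rw [hSK, hsum K, hp0eq]
    have hE1 : (m:ℝ) * η (m-1) ≤ Sm := by
      have h := Finset.card_nsmul_le_sum (Finset.range m) η (η (m-1))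
        (fun k hk => hmono (m-1) (by omega) k (by
          have := Finset.mem_range.mp hk; omega))
      rw [Finset.card_range, nsmul_eq_mul] at h
      exact h
    have hE2 : T ≤ ((K:ℝ) - m) * η (m-1) := by
      have h := Finset.sum_le_card_nsmul (Finset.Ico m K) η (η (m-1))
        (fun k hk => by
          have hk' := Finset.mem_Ico.mp hk
          exact hmono k (by omega) (m-1) (by omega))
      rw [Nat.card_Ico, nsmul_eq_mul] at h
      rw [hT]
      calc ∑ k ∈ Finset.Ico m K, η k ≤ ((K - m : ℕ):ℝ) * η (m-1) := h
        _ = ((K:ℝ) - m) * η (m-1) := by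
          rw [Nat.cast_sub hmK]
    -- combine
    have hKm : (m:ℝ) ≤ K := by exact_mod_cast hmK
    have h01 : 0 ≤ f xs + Sm + T := by
      have : f (p K) = f xs + SK := by linarith [hSKval]
      linarith [hsplit, hfK]
    have h02 : 0 ≤ (m:ℝ) * f xs + (K:ℝ) * Sm := by
      have hz1 : (m:ℝ) * T ≤ (m:ℝ) * (((K:ℝ) - m) * η (m-1)) :=
        mul_le_mul_of_nonneg_left hE2 hm0.le
      have hz2 : ((K:ℝ) - m) * ((m:ℝ) * η (m-1)) ≤ ((K:ℝ) - m) * Sm :=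
        mul_le_mul_of_nonneg_left hE1 (by linarith)
      have hz3 : 0 ≤ (m:ℝ) * (f xs + Sm + T) := mul_nonneg hm0.le h01
      nlinarith
    have hfxs : 0 ≤ f xs := hf_nonneg xs hxs
    -- Sm ≥ -(m/K) * f xs and m/K ≤ m*a/(m-a)
    have hdiv : (m:ℝ)/K ≤ ((m:ℝ)*a)/((m:ℝ)-a) := by
      rw [div_le_div_iff₀ hKpos hma]
      have h9 : (m:ℝ) - a ≤ K * a := by
        have := hKge
        rwa [div_le_iff₀ ha] at this
      nlinarith
    have hSmge : -(((m:ℝ)/K) * f xs) ≤ Sm := by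
      rw [neg_le]
      rw [div_mul_eq_mul_div, le_div_iff₀ hKpos]
      nlinarith
    have hfinal : -((((m:ℝ)*a)/((m:ℝ)-a)) * f xs) ≤ Sm := by
      have := mul_le_mul_of_nonneg_right hdiv hfxs
      linarith
    linarith [hSmval, hfinal]
  -- limit argument
  have htend : Filter.Tendsto (fun m : ℕ => (1 - ((m:ℝ)*a)/((m:ℝ)-a)) * f xs)
      Filter.atTop (nhds ((1 - a) * f xs)) := by
    have htop : Filter.Tendsto (fun m : ℕ => (m:ℝ) - a) Filter.atTop Filter.atTop := by
      have := Filter.tendsto_atTop_add_const_right Filter.atTop (-a)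
        (tendsto_natCast_atTop_atTop (R := ℝ))
      simpa [sub_eq_add_neg] using this
    have hz : Filter.Tendsto (fun m : ℕ => a^2/((m:ℝ)-a)) Filter.atTop (nhds 0) :=
      Filter.Tendsto.div_atTop tendsto_const_nhds htop
    have h1 : Filter.Tendsto (fun m : ℕ => a + a^2/((m:ℝ)-a)) Filter.atTop (nhds a) := by
      have := Filter.Tendsto.add
        (tendsto_const_nhds : Filter.Tendsto (fun _ : ℕ => a) Filter.atTop (nhds a)) hz
      rw [add_zero] at this
      exact this
    have heq : ∀ᶠ m : ℕ in Filter.atTop, a + a^2/((m:ℝ)-a) = ((m:ℝ)*a)/((m:ℝ)-a) := by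
      filter_upwards [Filter.eventually_ge_atTop 2] with m hm
      have hma : (0:ℝ) < (m:ℝ) - a := by
        have : (2:ℝ) ≤ m := by exact_mod_cast hm
        linarith
      field_simp
      ring
    have h2 : Filter.Tendsto (fun m : ℕ => ((m:ℝ)*a)/((m:ℝ)-a)) Filter.atTop (nhds a) :=
      h1.congr' heq
    have := (((tendsto_const_nhds : Filter.Tendsto (fun _ : ℕ => (1:ℝ)) Filter.atTop (nhds 1))).sub h2).mul_const (f xs)
    exact this
  have hev : ∀ᶠ m : ℕ in Filter.atTop, (1 - ((m:ℝ)*a)/((m:ℝ)-a)) * f xs ≤ f (xs ⊔ x) := by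
    filter_upwards [Filter.eventually_ge_atTop 2] with m hm
    exact main m hm
  exact le_of_tendsto htend hev
end

section
/- Let ε ∈ (0,1) and let F* ≥ 0. Suppose a sequence (a_j)_{j=0}^{1/ε} of reals satisfies a_0 = 0 and for each j ≥ 1, a_j ≥ a_{j-1} + (1 - 5ε)·ε·((1-ε)^j F* - a_j - 3ε F*). Then for every j, a_j ≥ ε j (1-ε)^j F* - 9 j ε^2 F*. -/
/-!
Write `c = ε(1 - 5ε)` and `b_j = ε j (1-ε)^j F - 9 j ε² F`. The recurrence reads
`(1 + c) a_j ≥ a_{j-1} + c ((1-ε)^j F - 3εF)`, and `1 + c > 0` because `mε = 1` forces `ε ≤ 1/2`.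
So `a_j ≥ b_j` follows by induction once `b_{j-1} + c ((1-ε)^j F - 3εF) ≥ (1 + c) b_j`.
With `s = jε ≤ 1` the slack of this inequality is
`ε² F (6 + 15ε + 9(1-5ε)s - (1-ε)^{j-1}(1-s)(6-5ε))`, which is nonnegative since `(1-ε)^{j-1} ≤ 1`.
-/

lemma le_half_of_natCast_mul_eq_one {ε : ℝ} {m : ℕ} (hε : ε < 1) (hm : (m : ℝ) * ε = 1) :
    ε ≤ 1 / 2 := by
  have hm2 : (2 : ℝ) ≤ m := by
    have : 1 < m := by
      by_contra! h
      interval_cases m <;> simp at hm; linarith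
    exact_mod_cast this
  nlinarith

lemma target_step_le {ε F Q n : ℝ} (hε : 0 < ε) (hε2 : ε ≤ 1 / 2) (hF : 0 ≤ F) (hQ : Q ≤ 1)
    (hn : 0 ≤ n) (hnε : (n + 1) * ε ≤ 1) :
    (1 + ε * (1 - 5 * ε)) * (ε * (n + 1) * ((1 - ε) * Q) * F - 9 * (n + 1) * ε ^ 2 * F) ≤
      ε * n * Q * F - 9 * n * ε ^ 2 * F + ε * (1 - 5 * ε) * ((1 - ε) * Q * F - 3 * ε * F) := by
  set s := (n + 1) * ε with hs
  have hs0 : 0 ≤ s := by positivity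
  have hslack : Q * (1 - s) * (6 - 5 * ε) ≤ 6 + 15 * ε + 9 * (1 - 5 * ε) * s := by
    have : Q * ((1 - s) * (6 - 5 * ε)) ≤ (1 - s) * (6 - 5 * ε) :=
      mul_le_of_le_one_left (mul_nonneg (by linarith) (by linarith)) hQ
    nlinarith [mul_nonneg hs0 (by linarith : 0 ≤ 1 / 2 - ε),
      mul_nonneg hε.le (by linarith : 0 ≤ 1 - s)]
  have hdiff : ε * n * Q * F - 9 * n * ε ^ 2 * F + ε * (1 - 5 * ε) * ((1 - ε) * Q * F - 3 * ε * F)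
      - (1 + ε * (1 - 5 * ε)) * (ε * (n + 1) * ((1 - ε) * Q) * F - 9 * (n + 1) * ε ^ 2 * F) =
      ε ^ 2 * F * (6 + 15 * ε + 9 * (1 - 5 * ε) * s - Q * (1 - s) * (6 - 5 * ε)) := by
    rw [hs]; ring
  have := mul_nonneg (mul_nonneg (sq_nonneg ε) hF) (sub_nonneg.2 hslack)
  linarith

theorem stmt_3 (ε : ℝ) (hε : ε ∈ Set.Ioo (0:ℝ) 1) (F : ℝ) (hF : 0 ≤ F)
    (m : ℕ) (hm : (m : ℝ) * ε = 1) (a : ℕ → ℝ) (h0 : a 0 = 0)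
    (hrec : ∀ j, 1 ≤ j → j ≤ m →
      a j ≥ a (j - 1) + (1 - 5 * ε) * ε * ((1 - ε) ^ j * F - a j - 3 * ε * F)) :
    ∀ j ≤ m, a j ≥ ε * j * (1 - ε) ^ j * F - 9 * j * ε ^ 2 * F := by
  obtain ⟨hε0, hε1⟩ := hε
  have hε2 := le_half_of_natCast_mul_eq_one hε1 hm
  intro j hj
  induction j with
  | zero => simp [h0]
  | succ n ih =>
    have hnε : ((n : ℝ) + 1) * ε ≤ 1 := by
      calc ((n : ℝ) + 1) * ε ≤ m * ε := by gcongr; exact_mod_cast hj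
        _ = 1 := hm
    have hQ : (1 - ε) ^ n ≤ 1 := pow_le_one₀ (by linarith) (by linarith)
    have hstep := target_step_le hε0 hε2 hF hQ n.cast_nonneg hnε
    have hrecn := hrec (n + 1) (by omega) hj
    rw [Nat.add_sub_cancel, pow_succ'] at hrecn
    have hc : 0 < 1 + ε * (1 - 5 * ε) := by nlinarith
    refine le_of_mul_le_mul_left ?_ hc
    push_cast
    rw [pow_succ']
    calc _ ≤ ε * n * (1 - ε) ^ n * F - 9 * n * ε ^ 2 * F
              + ε * (1 - 5 * ε) * ((1 - ε) * (1 - ε) ^ n * F - 3 * ε * F) := hstep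
      _ ≤ a n + ε * (1 - 5 * ε) * ((1 - ε) * (1 - ε) ^ n * F - 3 * ε * F) := by
          gcongr; exact ih (by omega)
      _ ≤ _ := by linarith
end

section
/- Let f : [0,1]^n → ℝ≥0 be differentiable, DR-submodular, and concave along non-negative directions. Let x*, z, x ∈ [0,1]^n with ‖z‖_∞ ≤ 1 - c for some c ∈ (0,1] and f(x) ≥ f(z). Then ⟨∇f(z) ∨ 0, (1 - z) ∘ x*⟩ ≥ c·f(x*) - f(x), where ∨ 0 takes the coordinate-wise positive part. -/
theorem stmt_9 (n : ℕ) (f : (Fin n → ℝ) → ℝ) (hf : Differentiable ℝ f)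
    (hf_nonneg : ∀ x : Fin n → ℝ, (∀ i, 0 ≤ x i ∧ x i ≤ 1) → 0 ≤ f x)
    (hDR : ∀ x y : Fin n → ℝ, (∀ i, 0 ≤ x i) → x ≤ y → (∀ i, y i ≤ 1) →
      ∀ i, fderiv ℝ f y (Pi.single i 1) ≤ fderiv ℝ f x (Pi.single i 1))
    (hconc : ∀ (u d : Fin n → ℝ), 0 ≤ d →
      ConcaveOn ℝ {t : ℝ | 0 ≤ t ∧ ∀ i, u i + t * d i ≤ 1} (fun t => f (u + t • d)))
    (xs z x : Fin n → ℝ)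
    (hxs : ∀ i, 0 ≤ xs i ∧ xs i ≤ 1) (hzbox : ∀ i, 0 ≤ z i ∧ z i ≤ 1)
    (hxbox : ∀ i, 0 ≤ x i ∧ x i ≤ 1)
    (c : ℝ) (hc : c ∈ Set.Ioc (0:ℝ) 1) (hz : ∀ i, z i ≤ 1 - c)
    (hfxz : f x ≥ f z) :
    ∑ i, max (fderiv ℝ f z (Pi.single i 1)) 0 * ((1 - z i) * xs i)
      ≥ c * f xs - f x := by
  obtain ⟨hc0, hc1⟩ := hc
  -- y = xs ⊔ z, d = y - z
  set y : Fin n → ℝ := fun i => max (xs i) (z i) with hy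
  set d : Fin n → ℝ := fun i => y i - z i with hd
  have hd0 : 0 ≤ d := fun i => by simp [hd, hy, le_max_right]
  have hybox : ∀ i, 0 ≤ y i ∧ y i ≤ 1 := fun i =>
    ⟨le_trans (hxs i).1 (le_max_left _ _), max_le (hxs i).2 (hzbox i).2⟩
  -- Step 3: f y ≥ c * f xs
  have step3 : c * f xs ≤ f y := by
    rcases eq_or_lt_of_le hc1 with hc1' | hc1'
    · -- c = 1, so z = 0 and y = xs
      have hz0 : ∀ i, z i = 0 := fun i => by
        have h := hz i; rw [hc1'] at h
        exact le_antisymm (by linarith) (hzbox i).1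
      have hyx : y = xs := by
        funext i; simp [hy, hz0 i, max_eq_left (hxs i).1]
      rw [hyx]
      nlinarith [hf_nonneg xs hxs]
    · -- c < 1 : set θ = 1 - c ∈ (0,1)
      set θ : ℝ := 1 - c with hθ
      have hθ0 : 0 < θ := by simp [hθ]; linarith
      have hθ1 : θ < 1 := by simp [hθ]; linarith
      set e : Fin n → ℝ := fun i => y i - xs i with he
      have he0 : 0 ≤ e := fun i => by simp [he, hy, le_max_left]
      have hei : ∀ i, e i ≤ θ := fun i => by
        have := hz i
        have := (hxs i).1
        simp only [he, hy]
        rcases max_cases (xs i) (z i) with ⟨h1, _⟩ | ⟨h1, _⟩ <;> rw [h1] <;> [linarith; linarith]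
      have hcc := hconc xs e he0
      have h0mem : (0:ℝ) ∈ {t : ℝ | 0 ≤ t ∧ ∀ i, xs i + t * e i ≤ 1} := by
        refine ⟨le_refl _, fun i => ?_⟩; simp [(hxs i).2]
      have hinvmem : (1/θ) ∈ {t : ℝ | 0 ≤ t ∧ ∀ i, xs i + t * e i ≤ 1} := by
        refine ⟨by positivity, fun i => ?_⟩
        have h1 : e i ≤ θ * (1 - xs i) := by
          have := hei i
          have h2 : e i ≤ θ - θ * xs i := by
            have hx1 : xs i ≤ 1 := (hxs i).2
            have hx0 : 0 ≤ xs i := (hxs i).1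
            rcases le_or_gt (z i) (xs i) with h | h
            · have : e i = 0 := by simp [he, hy, max_eq_left h]
              nlinarith
            · have : e i = z i - xs i := by simp [he, hy, max_eq_right h.le]
              have := hz i
              nlinarith
          linarith [h2]
        have h2 : (1/θ) * e i ≤ 1 - xs i := by
          rw [div_mul_eq_mul_div, one_mul, div_le_iff₀ hθ0]
          nlinarith [h1]
        linarith
      have key := hcc.2 h0mem hinvmem (by linarith : (0:ℝ) ≤ c)
        (le_of_lt hθ0) (by simp [hθ])
      have hpt : c • (0:ℝ) + θ • (1/θ) = 1 := by
        simp [hθ0.ne']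
      rw [hpt] at key
      have h1e : xs + (1:ℝ) • e = y := by
        funext i; simp [he]
      have h0e : xs + (0:ℝ) • e = xs := by funext i; simp
      simp only [h1e, h0e] at key
      have hnn : 0 ≤ f (xs + (1/θ) • e) := by
        apply hf_nonneg
        intro i
        constructor
        · have := he0 i
          have := (hxs i).1
          have : 0 ≤ (1/θ) * e i := mul_nonneg (by positivity) (he0 i)
          simp only [Pi.add_apply, Pi.smul_apply, smul_eq_mul]
          linarith [(hxs i).1]
        · exact hinvmem.2 i
      calc c * f xs = c • f xs + θ • (0:ℝ) := by simp
        _ ≤ c • f xs + θ • f (xs + (1/θ) • e) := by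
              simp only [smul_eq_mul]
              nlinarith
        _ ≤ f y := key
  -- Step 2: fderiv f z d ≥ f y - f z
  have step2 : f y - f z ≤ fderiv ℝ f z d := by
    have hcc := hconc z d hd0
    have h0mem : (0:ℝ) ∈ {t : ℝ | 0 ≤ t ∧ ∀ i, z i + t * d i ≤ 1} := by
      refine ⟨le_refl _, fun i => ?_⟩; simp [(hzbox i).2]
    have h1mem : (1:ℝ) ∈ {t : ℝ | 0 ≤ t ∧ ∀ i, z i + t * d i ≤ 1} := by
      refine ⟨zero_le_one, fun i => ?_⟩
      simp only [one_mul, hd]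
      have := (hybox i).2; linarith
    have hder : HasDerivAt (fun t : ℝ => f (z + t • d)) (fderiv ℝ f z d) 0 := by
      have hin : HasDerivAt (fun t : ℝ => z + t • d) d 0 := by
        simpa using ((hasDerivAt_id (0:ℝ)).smul_const d).const_add z
      have := (hf (z + (0:ℝ) • d)).hasFDerivAt.comp_hasDerivAt 0 hin
      rw [zero_smul, add_zero] at this
      exact this
    have hsl := hcc.slope_le_of_hasDerivAt h0mem h1mem zero_lt_one hder
    have h1e : z + (1:ℝ) • d = y := by funext i; simp [hd]
    have h0e : z + (0:ℝ) • d = z := by funext i; simp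
    simp only [slope_def_field, h1e, h0e, sub_zero, div_one] at hsl
    exact hsl
  -- Express fderiv f z d as a sum
  have hdsum : d = ∑ i, d i • (Pi.single i 1 : Fin n → ℝ) := by
    funext j
    simp [Finset.sum_apply, Pi.single_apply, mul_comm]
  have hsum : fderiv ℝ f z d = ∑ i, d i * fderiv ℝ f z (Pi.single i 1) := by
    conv_lhs => rw [hdsum]
    rw [map_sum]
    simp [smul_eq_mul]
  -- Step 1 + combine
  have hterm : ∀ i, d i * fderiv ℝ f z (Pi.single i 1)
      ≤ max (fderiv ℝ f z (Pi.single i 1)) 0 * ((1 - z i) * xs i) := by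
    intro i
    have hd1 : d i ≤ (1 - z i) * xs i := by
      simp only [hd, hy]
      rcases max_cases (xs i) (z i) with ⟨h1, h2⟩ | ⟨h1, h2⟩ <;> rw [h1]
      · nlinarith [(hzbox i).1, (hzbox i).2, (hxs i).2]
      · nlinarith [(hzbox i).2, (hxs i).1]
    have hd0i : 0 ≤ d i := hd0 i
    have hnn2 : 0 ≤ (1 - z i) * xs i := by
      have := (hzbox i).2; have := (hxs i).1; nlinarith
    calc d i * fderiv ℝ f z (Pi.single i 1)
        ≤ d i * max (fderiv ℝ f z (Pi.single i 1)) 0 :=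
          mul_le_mul_of_nonneg_left (le_max_left _ _) hd0i
      _ ≤ ((1 - z i) * xs i) * max (fderiv ℝ f z (Pi.single i 1)) 0 :=
          mul_le_mul_of_nonneg_right hd1 (le_max_right _ _)
      _ = max (fderiv ℝ f z (Pi.single i 1)) 0 * ((1 - z i) * xs i) := mul_comm _ _
  have hsumle : fderiv ℝ f z d
      ≤ ∑ i, max (fderiv ℝ f z (Pi.single i 1)) 0 * ((1 - z i) * xs i) := by
    rw [hsum]
    exact Finset.sum_le_sum fun i _ => hterm i
  have : c * f xs - f x ≤ f y - f z := by linarith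
  linarith
end

section
/- Let F : 2^V → ℝ be a submodular set function on a finite ground set V. Then its multilinear extension f(x) = Σ_{S ⊆ V} F(S) Π_{i∈S} x_i Π_{i∉S} (1-x_i) is DR-submodular on [0,1]^V: for all x ≤ y coordinate-wise, all i ∈ V, and all δ ∈ [0,1] with x+δe_i, y+δe_i ∈ [0,1]^V, f(x + δe_i) - f(x) ≥ f(y + δe_i) - f(y). -/
open Finset

noncomputable def ME (n : ℕ) (g : Finset (Fin n) → ℝ) (s : Finset (Fin n))
    (z : Fin n → ℝ) : ℝ :=
  ∑ T ∈ s.powerset, g T * (∏ j ∈ T, z j) * ∏ j ∈ s \ T, (1 - z j)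

lemma ME_insert (n : ℕ) (g : Finset (Fin n) → ℝ) (s : Finset (Fin n)) (j : Fin n)
    (hj : j ∉ s) (z : Fin n → ℝ) :
    ME n g (insert j s) z
      = z j * ME n (fun T => g (insert j T)) s z + (1 - z j) * ME n g s z := by
  unfold ME
  rw [Finset.sum_powerset_insert hj, ← Finset.sum_add_distrib, Finset.mul_sum,
    Finset.mul_sum, ← Finset.sum_add_distrib]
  refine Finset.sum_congr rfl ?_
  intro T hT
  rw [Finset.mem_powerset] at hT
  have hjT : j ∉ T := fun h => hj (hT h)
  have h1 : insert j s \ insert j T = s \ T := by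
    ext k
    simp only [Finset.mem_sdiff, Finset.mem_insert]
    constructor
    · rintro ⟨h2 | h2, h3⟩
      · exact absurd (Or.inl h2) h3
      · exact ⟨h2, fun hk => h3 (Or.inr hk)⟩
    · rintro ⟨h2, h3⟩
      exact ⟨Or.inr h2, by rintro (rfl | hk); exacts [hj h2, h3 hk]⟩
  have h2 : insert j s \ T = insert j (s \ T) := by
    ext k
    simp only [Finset.mem_sdiff, Finset.mem_insert]
    constructor
    · rintro ⟨h2 | h2, h3⟩
      · exact Or.inl h2
      · exact Or.inr ⟨h2, h3⟩
    · rintro (rfl | ⟨h2, h3⟩)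
      exacts [⟨Or.inl rfl, hjT⟩, ⟨Or.inr h2, h3⟩]
  have hjsT : j ∉ s \ T := by simp [hj]
  rw [Finset.prod_insert hjT, h1, h2, Finset.prod_insert hjsT]
  ring

lemma ME_indep (n : ℕ) (g : Finset (Fin n) → ℝ) (s : Finset (Fin n)) (j : Fin n)
    (hj : j ∉ s) (z : Fin n → ℝ) (a : ℝ) :
    ME n g s (Function.update z j a) = ME n g s z := by
  unfold ME
  refine Finset.sum_congr rfl ?_
  intro T hT
  rw [Finset.mem_powerset] at hT
  congr 1
  · congr 1
    refine Finset.prod_congr rfl fun k hk => ?_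
    exact Function.update_of_ne (fun h => hj (hT (by rwa [h] at hk))) _ _
  · refine Finset.prod_congr rfl fun k hk => ?_
    have : k ≠ j := fun h => hj (h ▸ (Finset.mem_sdiff.1 hk).1)
    rw [Function.update_of_ne this]

lemma ME_nonneg_weight (n : ℕ) (s T : Finset (Fin n)) (z : Fin n → ℝ)
    (h0 : ∀ j ∈ s, 0 ≤ z j) (h1 : ∀ j ∈ s, z j ≤ 1) (hT : T ⊆ s) :
    0 ≤ (∏ j ∈ T, z j) * ∏ j ∈ s \ T, (1 - z j) := by
  apply mul_nonneg
  · exact Finset.prod_nonneg fun j hj => h0 j (hT hj)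
  · exact Finset.prod_nonneg fun j hj => by
      have := h1 j (Finset.mem_sdiff.1 hj).1; linarith

lemma ME_le_ME (n : ℕ) (g₁ g₂ : Finset (Fin n) → ℝ) (s : Finset (Fin n)) (z : Fin n → ℝ)
    (hg : ∀ T ⊆ s, g₁ T ≤ g₂ T)
    (h0 : ∀ j ∈ s, 0 ≤ z j) (h1 : ∀ j ∈ s, z j ≤ 1) :
    ME n g₁ s z ≤ ME n g₂ s z := by
  unfold ME
  refine Finset.sum_le_sum fun T hT => ?_
  rw [Finset.mem_powerset] at hT
  rw [mul_assoc, mul_assoc]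
  exact mul_le_mul_of_nonneg_right (hg T hT) (ME_nonneg_weight n s T z h0 h1 hT)

lemma ME_antitone (n : ℕ) (g : Finset (Fin n) → ℝ) (s : Finset (Fin n))
    (hg : ∀ T ⊆ s, ∀ j ∈ s, j ∉ T → g (insert j T) ≤ g T)
    (x y : Fin n → ℝ)
    (h0 : ∀ j ∈ s, 0 ≤ x j) (hxy : ∀ j ∈ s, x j ≤ y j) (h1 : ∀ j ∈ s, y j ≤ 1) :
    ME n g s y ≤ ME n g s x := by
  induction s using Finset.induction generalizing g with
  | empty => simp [ME]
  | @insert j s hj ih =>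
    have hgs : ∀ T ⊆ s, ∀ k ∈ s, k ∉ T → g (insert k T) ≤ g T := by
      intro T hT k hk hkT
      exact hg T (hT.trans (Finset.subset_insert j s)) k (Finset.mem_insert_of_mem hk) hkT
    have hgj : ∀ T ⊆ s, ∀ k ∈ s, k ∉ T →
        g (insert j (insert k T)) ≤ g (insert j T) := by
      intro T hT k hk hkT
      have hkj : k ≠ j := fun h => hj (h ▸ hk)
      have : insert k (insert j T) = insert j (insert k T) := by
        ext m; simp only [Finset.mem_insert]; tauto
      rw [← this]
      exact hg (insert j T) (Finset.insert_subset_insert j hT) k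
        (Finset.mem_insert_of_mem hk)
        (by simp [hkj, hkT])
    have h0s : ∀ k ∈ s, 0 ≤ x k := fun k hk => h0 k (Finset.mem_insert_of_mem hk)
    have hxys : ∀ k ∈ s, x k ≤ y k := fun k hk => hxy k (Finset.mem_insert_of_mem hk)
    have h1s : ∀ k ∈ s, y k ≤ 1 := fun k hk => h1 k (Finset.mem_insert_of_mem hk)
    have h0x : ∀ k ∈ s, x k ≤ 1 := fun k hk => le_trans (hxys k hk) (h1s k hk)
    have h0y : ∀ k ∈ s, 0 ≤ y k := fun k hk => le_trans (h0s k hk) (hxys k hk)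
    rw [ME_insert n g s j hj x, ME_insert n g s j hj y]
    set Ax := ME n (fun T => g (insert j T)) s x with hAx
    set Bx := ME n g s x with hBx
    set Ay := ME n (fun T => g (insert j T)) s y with hAy
    set By := ME n g s y with hBy
    have hA : Ay ≤ Ax := ih _ hgj h0s hxys h1s
    have hB : By ≤ Bx := ih _ hgs h0s hxys h1s
    have hAB : Ay ≤ By := by
      apply ME_le_ME
      · intro T hT
        exact hg T (hT.trans (Finset.subset_insert j s)) j (Finset.mem_insert_self j s)
          (fun h => hj (hT h))
      · exact h0y
      · exact h1s
    have hxj0 : 0 ≤ x j := h0 j (Finset.mem_insert_self j s)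
    have hxjy : x j ≤ y j := hxy j (Finset.mem_insert_self j s)
    have hyj1 : y j ≤ 1 := h1 j (Finset.mem_insert_self j s)
    nlinarith [mul_le_mul_of_nonneg_left hA hxj0,
      mul_le_mul_of_nonneg_left hB (by linarith : (0:ℝ) ≤ 1 - x j),
      mul_le_mul_of_nonneg_right hxjy (by linarith : (0:ℝ) ≤ By - Ay)]

lemma ME_sub (n : ℕ) (g₁ g₂ : Finset (Fin n) → ℝ) (s : Finset (Fin n)) (z : Fin n → ℝ) :
    ME n (fun T => g₁ T - g₂ T) s z = ME n g₁ s z - ME n g₂ s z := by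
  unfold ME
  rw [← Finset.sum_sub_distrib]
  exact Finset.sum_congr rfl fun T _ => by ring

theorem stmt_16 (n : ℕ) (F : Finset (Fin n) → ℝ)
    (hsub : ∀ A B : Finset (Fin n), A ⊆ B → ∀ i ∉ B,
      F (insert i A) - F A ≥ F (insert i B) - F B)
    (f : (Fin n → ℝ) → ℝ)
    (hf : f = fun x => ∑ S : Finset (Fin n),
      F S * (∏ i ∈ S, x i) * ∏ i ∈ Sᶜ, (1 - x i)) :
    ∀ x y : Fin n → ℝ, (∀ i, 0 ≤ x i) → x ≤ y → (∀ i, y i ≤ 1) →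
      ∀ (i : Fin n) (δ : ℝ), 0 ≤ δ → δ ≤ 1 → x i + δ ≤ 1 → y i + δ ≤ 1 →
        f (x + δ • (Pi.single i 1 : Fin n → ℝ)) - f x ≥ f (y + δ • (Pi.single i 1 : Fin n → ℝ)) - f y := by
  intro x y hx0 hxy hy1 i δ hδ0 hδ1 hxδ hyδ
  subst hf
  have hfME : ∀ z : Fin n → ℝ, (∑ S : Finset (Fin n),
      F S * (∏ j ∈ S, z j) * ∏ j ∈ Sᶜ, (1 - z j)) = ME n F Finset.univ z := by
    intro z
    unfold ME
    rw [← Finset.powerset_univ]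
    exact Finset.sum_congr rfl fun T _ => by rw [Finset.compl_eq_univ_sdiff]
  simp only [hfME]
  have hi : i ∉ Finset.univ.erase i := Finset.notMem_erase i _
  have huniv : (Finset.univ : Finset (Fin n)) = insert i (Finset.univ.erase i) := by
    rw [Finset.insert_erase (Finset.mem_univ i)]
  -- key: f(z + δ e_i) - f z = δ * ME g (erase i) z
  have key : ∀ z : Fin n → ℝ,
      ME n F Finset.univ (z + δ • (Pi.single i 1 : Fin n → ℝ)) - ME n F Finset.univ z
        = δ * ME n (fun T => F (insert i T) - F T) (Finset.univ.erase i) z := by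
    intro z
    have hupd : z + δ • (Pi.single i 1 : Fin n → ℝ) = Function.update z i (z i + δ) := by
      funext j
      by_cases h : j = i
      · subst h; simp
      · simp [Function.update_of_ne h, Pi.single_apply, h]
    have expand : ∀ w : Fin n → ℝ, ME n F Finset.univ w
        = w i * ME n (fun T => F (insert i T)) (Finset.univ.erase i) w
          + (1 - w i) * ME n F (Finset.univ.erase i) w := by
      intro w
      conv_lhs => rw [← Finset.insert_erase (Finset.mem_univ i)]
      exact ME_insert n F _ i hi w
    rw [hupd, expand, expand, ME_indep n _ _ i hi, ME_indep n _ _ i hi,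
      Function.update_self, ME_sub]
    ring
  rw [key x, key y]
  apply mul_le_mul_of_nonneg_left _ hδ0
  apply ME_antitone
  · intro T hT j hj hjT
    have hji : j ≠ i := (Finset.mem_erase.1 hj).1
    have hiT : i ∉ T := fun h => (Finset.notMem_erase i _) (hT h)
    have := hsub T (insert j T) (Finset.subset_insert j T) i
      (by simp [Ne.symm hji, hiT])
    linarith [this]
  · intro j _; exact hx0 j
  · intro j _; exact hxy j
  · intro j _; exact hy1 j
end
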